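/- arXiv:2112.11354 — 2 statements merged into one kernel-verified Lean document; each statement's English description precedes it below -/
import Mathlib

section
/- For k ∈ {2, 3}, the minimum over θ ∈ (0, π] of the ratio h(θ) = ((1/2)(1 − cos(θ)/k)) / ((1/2)(1 − cos θ)) is attained at θ = π, giving minimum value 3/4 when k = 2 and 2/3 when k = 3. -/
/-! Writing `c = cos θ ∈ [-1, 1)`, the ratio is `(1 - c/k) / (1 - c)`, and clearing denominators
shows it exceeds its value `(k + 1) / (2k)` at `c = -1` by a multiple of `(k - 1)(1 + c) ≥ 0`. -/

namespace WarmStart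

noncomputable def cutRatio (k c : ℝ) : ℝ :=
  ((1/2) * (1 - c / k)) / ((1/2) * (1 - c))

theorem cutRatio_neg_one {k : ℝ} (hk : k ≠ 0) : cutRatio k (-1) = (k + 1) / (2 * k) := by
  unfold cutRatio
  field_simp
  ring

theorem cutRatio_neg_one_le {k c : ℝ} (hk : 1 ≤ k) (hc : -1 ≤ c) (hc1 : c < 1) :
    cutRatio k (-1) ≤ cutRatio k c := by
  have hk0 : (0 : ℝ) < k := by linarith
  rw [cutRatio_neg_one hk0.ne', cutRatio, div_le_div_iff₀ (by positivity) (by linarith)]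
  field_simp
  nlinarith [mul_nonneg (sub_nonneg.2 hk) (neg_le_iff_add_nonneg.1 hc)]

theorem cos_lt_one_of_mem_Ioc {θ : ℝ} (hθ : θ ∈ Set.Ioc 0 Real.pi) : Real.cos θ < 1 := by
  simpa using Real.cos_lt_cos_of_nonneg_of_le_pi le_rfl hθ.2 hθ.1

end WarmStart

open WarmStart in
theorem stmt_14 (k : ℝ) (hk : k = 2 ∨ k = 3)
    (h : ℝ → ℝ)
    (hh : h = fun θ => ((1/2) * (1 - Real.cos θ / k)) / ((1/2) * (1 - Real.cos θ))) :
    (∀ θ ∈ Set.Ioc (0:ℝ) Real.pi, h Real.pi ≤ h θ) ∧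
    h Real.pi = (if k = 2 then 3/4 else 2/3) := by
  have hk1 : 1 ≤ k := by rcases hk with rfl | rfl <;> norm_num
  have h_eq : ∀ θ, h θ = cutRatio k (Real.cos θ) := fun θ => by rw [hh]; rfl
  simp only [h_eq, Real.cos_pi]
  refine ⟨fun θ hθ => ?_, ?_⟩
  · exact cutRatio_neg_one_le hk1 (Real.neg_one_le_cos θ) (cos_lt_one_of_mem_Ioc hθ)
  · rcases hk with rfl | rfl <;> norm_num [cutRatio_neg_one]
end

section
/- Let G = (V, E) be a graph with non-negative edge weights w, and let x : V → S^{k−1} (k ∈ {2,3}) be unit vectors with HP(x) := Σ_{(i,j)∈E} w_{ij}·(θ_{ij}/π) ≥ κ·MaxCut(G), where θ_{ij} is the angle between x_i and x_j. Suppose a randomized rounding cuts each edge (i,j) independently of w with probability f_k(θ_{ij}) = (1/2)(1 − cos(θ_{ij})/k). Then the expected cut value F₀ = Σ_{(i,j)∈E} w_{ij} f_k(θ_{ij}) satisfies F₀ ≥ (3/4)κ·MaxCut(G) when k = 2 and F₀ ≥ (2/3)κ·MaxCut(G) when k = 3. -/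
/-!
Edge by edge, the rounding probability `f_k(θ) = (1 - cos θ / k) / 2` dominates a fixed multiple
of the hyperplane probability `θ / π` on `[0, π]`: both ratios follow from `cos θ ≤ 2 - 3θ/π`,
which is the quadratic bound `cos θ ≤ 1 - 2θ²/π²` on `[0, π/2]` and the chord bound
`cos θ ≤ 1 - 2θ/π` on `[π/2, π]`. Summing with non-negative weights gives
`F₀ ≥ c_k · HP(x) ≥ c_k · κ · MaxCut(G)`.
-/

open scoped RealInnerProductSpace

open Real

lemma Finset.mul_sum_le_sum_of_mul_le {ι : Type*} (s : Finset ι) {w a b : ι → ℝ} {c : ℝ}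
    (hw : ∀ i ∈ s, 0 ≤ w i) (hab : ∀ i ∈ s, c * a i ≤ b i) :
    c * ∑ i ∈ s, w i * a i ≤ ∑ i ∈ s, w i * b i := by
  rw [Finset.mul_sum]
  refine Finset.sum_le_sum fun i hi => ?_
  calc c * (w i * a i) = w i * (c * a i) := by ring
    _ ≤ w i * b i := mul_le_mul_of_nonneg_left (hab i hi) (hw i hi)

namespace Real

lemma cos_le_two_sub_three_mul_div_pi {θ : ℝ} (h0 : 0 ≤ θ) (hπ : θ ≤ π) :
    cos θ ≤ 2 - 3 * (θ / π) := by
  have hpi := pi_pos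
  set t := θ / π with ht
  have hθ : θ = π * t := by rw [ht]; field_simp
  have ht1 : t ≤ 1 := (div_le_one hpi).2 hπ
  rcases le_total θ (π / 2) with hle | hge
  · have hquad := cos_le_one_sub_mul_cos_sq (abs_le.2 ⟨by linarith, hπ⟩)
    have : 2 / π ^ 2 * θ ^ 2 = 2 * t ^ 2 := by rw [hθ]; field_simp
    have ht2 : t ≤ 1 / 2 := by rw [ht, div_le_iff₀ hpi]; linarith
    nlinarith
  · have hchord := one_sub_mul_le_cos (x := π - θ) (by linarith) (by linarith)
    rw [cos_pi_sub] at hchord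
    have : 2 / π * (π - θ) = 2 - 2 * t := by rw [hθ]; field_simp
    linarith

lemma three_quarters_mul_div_pi_le {θ : ℝ} (h0 : 0 ≤ θ) (hπ : θ ≤ π) :
    3 / 4 * (θ / π) ≤ 1 / 2 * (1 - cos θ / 2) := by
  linarith [cos_le_two_sub_three_mul_div_pi h0 hπ]

lemma two_thirds_mul_div_pi_le {θ : ℝ} (h0 : 0 ≤ θ) (hπ : θ ≤ π) :
    2 / 3 * (θ / π) ≤ 1 / 2 * (1 - cos θ / 3) := by
  have ht1 : θ / π ≤ 1 := (div_le_one pi_pos).2 hπ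
  linarith [cos_le_two_sub_three_mul_div_pi h0 hπ]

end Real

theorem stmt_15_general (nV k : ℕ)
    (E : Finset (Fin nV × Fin nV)) (w : Fin nV × Fin nV → ℝ) (hw : ∀ e, 0 ≤ w e)
    (x : Fin nV → EuclideanSpace ℝ (Fin k))
    (κ maxcut : ℝ)
    (hHP : κ * maxcut ≤ ∑ e ∈ E, w e * (Real.arccos ⟪x e.1, x e.2⟫ / Real.pi)) :
    (k = 2 → (3/4) * (κ * maxcut) ≤
      ∑ e ∈ E, w e * ((1/2) * (1 - Real.cos (Real.arccos ⟪x e.1, x e.2⟫) / k))) ∧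
    (k = 3 → (2/3) * (κ * maxcut) ≤
      ∑ e ∈ E, w e * ((1/2) * (1 - Real.cos (Real.arccos ⟪x e.1, x e.2⟫) / k))) := by
  have of_pointwise : ∀ c : ℝ, 0 ≤ c →
      (∀ θ, 0 ≤ θ → θ ≤ π → c * (θ / π) ≤ 1 / 2 * (1 - cos θ / k)) →
      c * (κ * maxcut) ≤
        ∑ e ∈ E, w e * ((1/2) * (1 - Real.cos (Real.arccos ⟪x e.1, x e.2⟫) / k)) :=
    fun c hc hθ => (mul_le_mul_of_nonneg_left hHP hc).trans <|
      E.mul_sum_le_sum_of_mul_le (fun e _ => hw e)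
        fun e _ => hθ _ (arccos_nonneg _) (arccos_le_pi _)
  refine ⟨fun hk => of_pointwise _ (by norm_num) fun θ h0 hπ => ?_,
    fun hk => of_pointwise _ (by norm_num) fun θ h0 hπ => ?_⟩
  · subst hk
    exact_mod_cast three_quarters_mul_div_pi_le h0 hπ
  · subst hk
    exact_mod_cast two_thirds_mul_div_pi_le h0 hπ

theorem stmt_15 (nV k : ℕ) (hk : k = 2 ∨ k = 3)
    (E : Finset (Fin nV × Fin nV)) (w : Fin nV × Fin nV → ℝ) (hw : ∀ e, 0 ≤ w e)
    (x : Fin nV → EuclideanSpace ℝ (Fin k)) (hx : ∀ i, ‖x i‖ = 1)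
    (κ maxcut : ℝ)
    (hmax : maxcut = Finset.univ.sup' ⟨∅, Finset.mem_univ ∅⟩
      (fun S : Finset (Fin nV) =>
        ∑ e ∈ E, if (e.1 ∈ S) ↔ (e.2 ∈ S) then 0 else w e))
    (hHP : κ * maxcut ≤ ∑ e ∈ E, w e * (Real.arccos ⟪x e.1, x e.2⟫ / Real.pi)) :
    (k = 2 → (3/4) * (κ * maxcut) ≤
      ∑ e ∈ E, w e * ((1/2) * (1 - Real.cos (Real.arccos ⟪x e.1, x e.2⟫) / k))) ∧
    (k = 3 → (2/3) * (κ * maxcut) ≤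
      ∑ e ∈ E, w e * ((1/2) * (1 - Real.cos (Real.arccos ⟪x e.1, x e.2⟫) / k))) :=
  stmt_15_general nV k E w hw x κ maxcut hHP
end
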